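/- arXiv:1310.4060 — 9 statements merged into one kernel-verified Lean document; each statement's English description precedes it below -/
import Mathlib

section
/- Let C be a systematic code over an alphabet of size q, of length n, dimension k ≥ 2, and minimum distance d. If q ≥ d, then n ≥ ∑_{j=0}^{k-1} ⌈d/q^j⌉. -/
open Finset

/-- `C` has minimum (Hamming) distance exactly `d`. -/
def minDistIs {n : ℕ} {A : Type*} [DecidableEq A] (C : Finset (Fin n → A)) (d : ℕ) : Prop :=
  (∀ x ∈ C, ∀ y ∈ C, x ≠ y → d ≤ hammingDist x y) ∧
    ∃ x ∈ C, ∃ y ∈ C, x ≠ y ∧ hammingDist x y = d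

/-- `C` is systematic: projection onto the first `k` coordinates is a bijection onto `A^k`. -/
def systematicOn {n k : ℕ} {A : Type*} (h : k ≤ n) (C : Finset (Fin n → A)) : Prop :=
  Set.BijOn (fun c (i : Fin k) => c (Fin.castLE h i)) (C : Set (Fin n → A)) Set.univ

/-- The Griesmer sum `∑_{j=0}^{k-1} ⌈d / q^j⌉`. -/
def griesmerSum (q d k : ℕ) : ℤ := ∑ j ∈ Finset.range k, ⌈(d : ℚ) / (q : ℚ) ^ j⌉

lemma griesmer_eval (q d k : ℕ) (hd : 1 ≤ d) (hqd : d ≤ q) (hk : 1 ≤ k) :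
    griesmerSum q d k = d + (k - 1 : ℤ) := by
  have hq : 1 ≤ q := le_trans hd hqd
  unfold griesmerSum
  induction k with
  | zero => omega
  | succ m ih =>
    rw [Finset.sum_range_succ]
    rcases Nat.eq_zero_or_pos m with hm | hm
    · subst hm; simp
    · rw [ih hm]
      have h1 : ⌈(d : ℚ) / (q : ℚ) ^ m⌉ = 1 := by
        rw [Int.ceil_eq_iff]
        constructor
        · norm_num; positivity
        · push_cast
          rw [div_le_one (by positivity)]
          calc (d:ℚ) ≤ q := by exact_mod_cast hqd
            _ ≤ q ^ m := by exact_mod_cast Nat.le_self_pow (by omega) q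
      rw [h1]; push_cast; ring

theorem stmt2 {A : Type*} [Fintype A] [DecidableEq A] {n k d : ℕ}
    (C : Finset (Fin n → A)) (hk : 2 ≤ k) (hkn : k ≤ n)
    (hcard : C.card = Fintype.card A ^ k)
    (hsys : systematicOn hkn C)
    (hmin : minDistIs C d)
    (hqd : d ≤ Fintype.card A) :
    (n : ℤ) ≥ griesmerSum (Fintype.card A) d k := by
  set q := Fintype.card A with hq
  obtain ⟨x0, hx0, y0, hy0, hxy0, hdist0⟩ := hmin.2
  have hd1 : 1 ≤ d := by
    rcases Nat.eq_zero_or_pos d with h | h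
    · exfalso; exact hxy0 (eq_of_hammingDist_eq_zero (by omega))
    · exact h
  -- q ≥ 2
  have hq2 : 2 ≤ q := by
    by_contra h
    have hq1 : q ^ k ≤ 1 := by
      have h1 : q ^ k ≤ 1 ^ k := Nat.pow_le_pow_left (by omega) k
      simpa using h1
    have : C.card ≤ 1 := hcard ▸ hq1
    have := Finset.card_le_one.mp this x0 hx0 y0 hy0
    exact hxy0 this
  -- two distinct elements of A
  obtain ⟨a, b, hab⟩ := Fintype.one_lt_card_iff.mp (by omega : 1 < Fintype.card A)
  -- the index k-1 in Fin k
  have hk1k : k - 1 < k := by omega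
  set j : Fin k := ⟨k - 1, hk1k⟩ with hj
  set u : Fin k → A := fun _ => a with hu
  set v : Fin k → A := Function.update u j b with hv
  obtain ⟨x, hx, hxu⟩ := hsys.surjOn (Set.mem_univ u)
  obtain ⟨y, hy, hyv⟩ := hsys.surjOn (Set.mem_univ v)
  have hxC : x ∈ C := hx
  have hyC : y ∈ C := hy
  have hxj : ∀ i : Fin k, x (Fin.castLE hkn i) = u i := fun i => congrFun hxu i
  have hyj : ∀ i : Fin k, y (Fin.castLE hkn i) = v i := fun i => congrFun hyv i
  have hxyne : x ≠ y := by
    intro h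
    have h1 := hxj j
    have h2 := hyj j
    rw [h] at h1
    rw [h1] at h2
    rw [hv, Function.update_self] at h2
    rw [hu] at h2
    exact hab h2
  have hdle : d ≤ hammingDist x y := hmin.1 x hxC y hyC hxyne
  -- they agree on indices < k-1
  have hagree : ∀ i : Fin n, i.val < k - 1 → x i = y i := by
    intro i hi
    have hik : i.val < k := by omega
    have : i = Fin.castLE hkn ⟨i.val, hik⟩ := by ext; rfl
    rw [this, hxj, hyj, hv, hu, Function.update_of_ne]
    intro h
    have : i.val = k - 1 := congrArg Fin.val h
    omega
  -- hammingDist x y ≤ n - (k-1)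
  have hb : k - 1 < n := by omega
  set b' : Fin n := ⟨k - 1, hb⟩ with hb'
  have hsub : ({i | x i ≠ y i} : Finset (Fin n)) ∩ Finset.Iio b' = ∅ := by
    rw [Finset.eq_empty_iff_forall_notMem]
    intro i hi
    rw [Finset.mem_inter, Finset.mem_Iio] at hi
    have h1 : x i ≠ y i := by simpa using hi.1
    exact h1 (hagree i hi.2)
  have hcardIio : (Finset.Iio b').card = k - 1 := by
    rw [Fin.card_Iio]
  have hunion : hammingDist x y + (k - 1) ≤ n := by
    have hdisj : Disjoint ({i | x i ≠ y i} : Finset (Fin n)) (Finset.Iio b') :=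
      Finset.disjoint_iff_inter_eq_empty.mpr hsub
    have := Finset.card_union_of_disjoint hdisj
    have hle := Finset.card_le_univ (({i | x i ≠ y i} : Finset (Fin n)) ∪ Finset.Iio b')
    simp only [Finset.card_univ, Fintype.card_fin] at hle
    rw [this, hcardIio] at hle
    exact hle
  have hnd : d + (k - 1) ≤ n := le_trans (by omega) hunion
  rw [griesmer_eval q d k hd1 hqd (by omega)]
  omega
end

section
/- There is no binary systematic code of length n = d + k - 1, dimension k ≥ 2, and minimum distance d = 3. Equivalently, every binary systematic code with k ≥ 2 and d = 3 satisfies n ≥ d + k. -/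
/-!
Take the codewords `x`, `y`, `z` carrying the messages `0`, `e₀`, `e₁`. Over a binary alphabet
three symbols are never pairwise distinct, so at each position the three words either all agree
or exactly two of the pairs differ; hence the sum of the three pairwise distances is twice the
number of positions where the words do not all agree. Among the message positions that happens
only at `0` and `1`, so `9 ≤ 2 * (2 + (n - k))`, i.e. `n - k ≥ 3`.
-/

open Finset

lemma hammingDist_add_hammingDist_add_hammingDist_eq {ι : Type*} [Fintype ι]
    (x y z : ι → Fin 2) :
    hammingDist x y + hammingDist x z + hammingDist y z = 2 * #{i | x i ≠ y i ∨ x i ≠ z i} := by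
  simp only [hammingDist, card_filter, ← sum_add_distrib, mul_sum]
  refine sum_congr rfl fun i _ => ?_
  generalize x i = a, y i = b, z i = c
  revert a b c
  decide

lemma card_filter_le_card_filter_castLE_add {n k : ℕ} (h : k ≤ n) (p : Fin n → Prop)
    [DecidablePred p] : #{i | p i} ≤ #{j : Fin k | p (Fin.castLE h j)} + (n - k) := by
  obtain ⟨r, rfl⟩ := Nat.exists_eq_add_of_le h
  rw [card_filter, card_filter, Fin.sum_univ_add, Nat.add_sub_cancel_left]
  gcongr
  · rfl
  · calc _ ≤ ∑ _j : Fin r, 1 := sum_le_sum fun _ _ => ite_le_one le_rfl zero_le_one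
      _ = r := by simp

theorem stmt5_general {n k : ℕ}
    (C : Finset (Fin n → Fin 2)) (hk : 2 ≤ k) (hkn : k ≤ n)
    (hsys : systematicOn hkn C)
    (hmin : minDistIs C 3) :
    n ≥ 3 + k := by
  set j₀ : Fin k := ⟨0, by omega⟩
  set j₁ : Fin k := ⟨1, by omega⟩
  have hj : j₀ ≠ j₁ := by simp [j₀, j₁, Fin.ext_iff]
  obtain ⟨x, hxC, hx⟩ := hsys.surjOn (Set.mem_univ (0 : Fin k → Fin 2))
  obtain ⟨y, hyC, hy⟩ := hsys.surjOn (Set.mem_univ (Pi.single j₀ 1 : Fin k → Fin 2))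
  obtain ⟨z, hzC, hz⟩ := hsys.surjOn (Set.mem_univ (Pi.single j₁ 1 : Fin k → Fin 2))
  simp only [funext_iff] at hx hy hz
  have hxy : x ≠ y := by
    rintro rfl
    simpa using (hx j₀).symm.trans (hy j₀)
  have hxz : x ≠ z := by
    rintro rfl
    simpa using (hx j₁).symm.trans (hz j₁)
  have hyz : y ≠ z := by
    rintro rfl
    simpa [hj] using (hy j₀).symm.trans (hz j₀)
  have hmsg : #{j : Fin k | x (Fin.castLE hkn j) ≠ y (Fin.castLE hkn j) ∨
      x (Fin.castLE hkn j) ≠ z (Fin.castLE hkn j)} ≤ 2 := by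
    refine (card_le_card fun j => ?_).trans (card_le_two (a := j₀) (b := j₁))
    simp only [mem_filter, mem_univ, true_and, mem_insert, mem_singleton, hx, hy, hz]
    by_contra! hne
    simp [Pi.single_apply, hne.2.1] at hne
  have hsum := hammingDist_add_hammingDist_add_hammingDist_eq x y z
  have hsplit := card_filter_le_card_filter_castLE_add hkn (fun i => x i ≠ y i ∨ x i ≠ z i)
  have dxy := hmin.1 x hxC y hyC hxy
  have dxz := hmin.1 x hxC z hzC hxz
  have dyz := hmin.1 y hyC z hzC hyz
  omega

theorem stmt5 {n k : ℕ}
    (C : Finset (Fin n → Fin 2)) (hk : 2 ≤ k) (hkn : k ≤ n)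
    (hcard : C.card = 2 ^ k)
    (hsys : systematicOn hkn C)
    (hmin : minDistIs C 3) :
    n ≥ 3 + k :=
  stmt5_general C hk hkn hsys hmin
end

section
/- There is no binary systematic code of length n = d + k - 1, dimension k ≥ 2, and minimum distance d = 4. Equivalently, every binary systematic code with k ≥ 2 and d = 4 satisfies n ≥ d + k. -/
open Finset

/-! Take the codewords `c₀, c₁, c₂` whose messages are `0`, `e₀` and `e₀ + e₁`. Being pairwise
distinct, they are pairwise at distance `≥ 4`. They agree on the message positions `2, …, k - 1`,
so they can differ only on the `2 + (n - k)` positions `0, 1, k, …, n - 1`. Over a binary alphabet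
every position where three words are not all equal contributes exactly `2` to the sum of their
pairwise distances, hence `12 ≤ 2 (2 + (n - k))`. -/

theorem hammingDist_add_hammingDist_add_hammingDist_fin_two {ι : Type*} [Fintype ι]
    (x y z : ι → Fin 2) :
    hammingDist x y + hammingDist y z + hammingDist x z =
      2 * #{i | x i ≠ y i ∨ y i ≠ z i} := by
  simp only [hammingDist, card_filter, mul_sum, ← sum_add_distrib]
  refine sum_congr rfl fun i _ => ?_
  generalize x i = a, y i = b, z i = c
  revert a b c
  decide

theorem card_fin_filter_lt_or_ge_le (n a k : ℕ) :
    #{i : Fin n | (i : ℕ) < a ∨ k ≤ (i : ℕ)} ≤ a + (n - k) := by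
  refine (card_le_card_of_injOn Fin.val (t := range a ∪ Ico k n) (fun i hi => ?_)
    Fin.val_injective.injOn).trans ((card_union_le _ _).trans (by simp))
  simp only [coe_filter, mem_univ, true_and, Set.mem_ofPred_eq] at hi
  simp only [coe_union, coe_range, coe_Ico, Set.mem_union, Set.mem_Iio, Set.mem_Ico]
  omega

theorem systematicOn.exists_mem_eq_message {n k : ℕ} {A : Type*} {h : k ≤ n}
    {C : Finset (Fin n → A)} (hC : systematicOn h C) (m : Fin k → A) :
    ∃ c ∈ C, ∀ (i : Fin n) (hi : (i : ℕ) < k), c i = m ⟨i, hi⟩ := by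
  obtain ⟨c, hc, hcm⟩ := hC.surjOn (Set.mem_univ m)
  exact ⟨c, hc, fun i hi => congrFun hcm ⟨i, hi⟩⟩

theorem stmt6_general {n k : ℕ}
    (C : Finset (Fin n → Fin 2)) (hk : 2 ≤ k) (hkn : k ≤ n)
    (hsys : systematicOn hkn C)
    (hmin : minDistIs C 4) :
    n ≥ 4 + k := by
  choose c hcC hc using fun j : ℕ =>
    hsys.exists_mem_eq_message fun i => if (i : ℕ) < j then 1 else 0
  have hdist : ∀ a b, a < b → b ≤ 2 → 4 ≤ hammingDist (c a) (c b) := by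
    intro a b hab hb
    refine hmin.1 _ (hcC a) _ (hcC b) fun hcab => ?_
    have hak : a < k := by omega
    have hdiffer := congrFun hcab ⟨a, by omega⟩
    rw [hc a _ hak, hc b _ hak] at hdiffer
    simp [hab] at hdiffer
  have hsupport : ({i | c 0 i ≠ c 1 i ∨ c 1 i ≠ c 2 i} : Finset (Fin n)) ⊆
      ({i | (i : ℕ) < 2 ∨ k ≤ (i : ℕ)} : Finset (Fin n)) := by
    intro i hdiff
    simp only [mem_filter, mem_univ, true_and] at hdiff ⊢
    by_contra! hfar
    simp [hc _ i hfar.2, show ¬(i : ℕ) < 1 by omega, show ¬(i : ℕ) < 2 by omega] at hdiff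
  suffices 12 ≤ 2 * (2 + (n - k)) by omega
  calc 12 = 4 + 4 + 4 := rfl
    _ ≤ hammingDist (c 0) (c 1) + hammingDist (c 1) (c 2) + hammingDist (c 0) (c 2) :=
        add_le_add
          (add_le_add (hdist 0 1 (by decide) (by decide)) (hdist 1 2 (by decide) (by decide)))
          (hdist 0 2 (by decide) (by decide))
    _ = 2 * #{i | c 0 i ≠ c 1 i ∨ c 1 i ≠ c 2 i} :=
        hammingDist_add_hammingDist_add_hammingDist_fin_two _ _ _
    _ ≤ 2 * (2 + (n - k)) :=
        Nat.mul_le_mul_left 2 ((card_le_card hsupport).trans (card_fin_filter_lt_or_ge_le n 2 k))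

theorem stmt6 {n k : ℕ}
    (C : Finset (Fin n → Fin 2)) (hk : 2 ≤ k) (hkn : k ≤ n)
    (hcard : C.card = 2 ^ k)
    (hsys : systematicOn hkn C)
    (hmin : minDistIs C 4) :
    n ≥ 4 + k :=
  stmt6_general C hk hkn hsys hmin
end

section
/- There is no ternary systematic code of length n = d + k - 1, dimension k ≥ 2, and minimum distance d = 4. Equivalently, every systematic code over an alphabet of size 3 with k ≥ 2 and d = 4 satisfies n ≥ d + k. -/
open Finset

/-- A "Latin square" function on `Fin 3` has at least two cells off the first row and
column sharing the value of the corner cell. -/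
lemma single_latin (f : Fin 3 → Fin 3 → Fin 3)
    (hrow : ∀ x x' y, x ≠ x' → f x y ≠ f x' y)
    (hcol : ∀ x y y', y ≠ y' → f x y ≠ f x y') :
    2 ≤ (Finset.univ.filter
      (fun p : Fin 3 × Fin 3 => p.1 ≠ 0 ∧ p.2 ≠ 0 ∧ f p.1 p.2 = f 0 0)).card := by
  have hsurj : ∀ y : Fin 3, ∃ x, f x y = f 0 0 := by
    intro y
    have hinj : Function.Injective (fun x => f x y) := by
      intro a b hab
      by_contra hne
      exact hrow a b y hne hab
    exact Finite.surjective_of_injective hinj (f 0 0)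
  obtain ⟨x1, hx1⟩ := hsurj 1
  obtain ⟨x2, hx2⟩ := hsurj 2
  have hx1ne : x1 ≠ 0 := by
    rintro rfl
    exact hcol 0 1 0 (by decide) hx1
  have hx2ne : x2 ≠ 0 := by
    rintro rfl
    exact hcol 0 2 0 (by decide) hx2
  refine Finset.one_lt_card.mpr ⟨(x1, 1), ?_, (x2, 2), ?_, ?_⟩
  · simp [hx1, hx1ne]
  · simp [hx2, hx2ne]
  · simp

/-- Pigeonhole: three functions on the 3×3 grid, each with at least two "colliding"
diagonal neighbours of the corner, but each diagonal neighbour colliding for at most one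
of them: impossible. -/
lemma pigeon (f : Fin 3 → Fin 3 → Fin 3 → Fin 3)
    (h2 : ∀ t, 2 ≤ (Finset.univ.filter
      (fun p : Fin 3 × Fin 3 => p.1 ≠ 0 ∧ p.2 ≠ 0 ∧ f t p.1 p.2 = f t 0 0)).card)
    (h1 : ∀ p : Fin 3 × Fin 3, p.1 ≠ 0 → p.2 ≠ 0 →
      (Finset.univ.filter (fun t : Fin 3 => f t p.1 p.2 = f t 0 0)).card ≤ 1) :
    False := by
  have key : ∀ t, (Finset.univ.filter
      (fun p : Fin 3 × Fin 3 => p.1 ≠ 0 ∧ p.2 ≠ 0 ∧ f t p.1 p.2 = f t 0 0)).card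
      = ∑ p : Fin 3 × Fin 3, if p.1 ≠ 0 ∧ p.2 ≠ 0 ∧ f t p.1 p.2 = f t 0 0 then 1 else 0 :=
    fun t => Finset.card_filter _ _
  have h6 : 6 ≤ ∑ t : Fin 3, ∑ p : Fin 3 × Fin 3,
      (if p.1 ≠ 0 ∧ p.2 ≠ 0 ∧ f t p.1 p.2 = f t 0 0 then 1 else 0) := by
    calc (6 : ℕ) = ∑ _t : Fin 3, 2 := by simp
    _ ≤ _ := Finset.sum_le_sum (fun t _ => (key t) ▸ h2 t)
  rw [Finset.sum_comm] at h6
  have h4 : ∑ p : Fin 3 × Fin 3, ∑ t : Fin 3,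
      (if p.1 ≠ 0 ∧ p.2 ≠ 0 ∧ f t p.1 p.2 = f t 0 0 then 1 else 0)
      ≤ ∑ p : Fin 3 × Fin 3, (if p.1 ≠ 0 ∧ p.2 ≠ 0 then 1 else 0) := by
    apply Finset.sum_le_sum
    intro p _
    by_cases hp : p.1 ≠ 0 ∧ p.2 ≠ 0
    · have : ∑ t : Fin 3, (if p.1 ≠ 0 ∧ p.2 ≠ 0 ∧ f t p.1 p.2 = f t 0 0 then 1 else 0)
          = (Finset.univ.filter (fun t : Fin 3 => f t p.1 p.2 = f t 0 0)).card := by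
        rw [Finset.card_filter]
        exact Finset.sum_congr rfl (fun t _ => by
          simp only [hp.1, hp.2, ne_eq, not_false_eq_true, true_and])
      rw [this, if_pos hp]
      exact h1 p hp.1 hp.2
    · have : ∀ t : Fin 3,
          (if p.1 ≠ 0 ∧ p.2 ≠ 0 ∧ f t p.1 p.2 = f t 0 0 then (1:ℕ) else 0) = 0 := by
        intro t
        rw [if_neg]
        intro h
        exact hp ⟨h.1, h.2.1⟩
      simp [this]
  have hval : (∑ p : Fin 3 × Fin 3, if p.1 ≠ 0 ∧ p.2 ≠ 0 then (1:ℕ) else 0) = 4 := by decide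
  omega

theorem stmt7 {A : Type*} [Fintype A] [DecidableEq A] {n k : ℕ}
    (hq : Fintype.card A = 3)
    (C : Finset (Fin n → A)) (hk : 2 ≤ k) (hkn : k ≤ n)
    (hcard : C.card = 3 ^ k)
    (hsys : systematicOn hkn C)
    (hmin : minDistIs C 4) :
    n ≥ 4 + k := by
  by_contra hlt
  push_neg at hlt
  obtain ⟨hmin1, -⟩ := hmin
  obtain ⟨-, -, hsurj⟩ := hsys
  set e := Fintype.equivFinOfCardEq hq with he
  choose enc hC hP using fun m : Fin k → A => hsurj (Set.mem_univ m)
  -- basic facts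
  have hPt : ∀ (m : Fin k → A) (j : Fin k), enc m (Fin.castLE hkn j) = m j :=
    fun m j => congrFun (hP m) j
  have hdist : ∀ m m' : Fin k → A, m ≠ m' → 4 ≤ hammingDist (enc m) (enc m') := by
    intro m m' hne
    refine hmin1 _ (hC m) _ (hC m') ?_
    intro h
    exact hne (by rw [← hP m, ← hP m', h])
  -- the message map
  set msg : Fin 3 → Fin 3 → Fin k → A := fun x y i =>
    if (i : ℕ) = 0 then e.symm x else if (i : ℕ) = 1 then e.symm y else e.symm 0 with hmsg
  set cw : Fin 3 → Fin 3 → Fin n → A := fun x y => enc (msg x y) with hcw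
  have hk0 : (0 : ℕ) < k := by omega
  have hk1 : (1 : ℕ) < k := by omega
  have hn0 : (0 : ℕ) < n := by omega
  have hn1 : (1 : ℕ) < n := by omega
  set N0 : Fin n := ⟨0, hn0⟩ with hN0
  set N1 : Fin n := ⟨1, hn1⟩ with hN1
  have hmsgne : ∀ x y x' y', x ≠ x' ∨ y ≠ y' → msg x y ≠ msg x' y' := by
    intro x y x' y' h hmm
    rcases h with h | h
    · have := congrFun hmm ⟨0, hk0⟩
      simp only [hmsg] at this
      exact h (e.symm.injective this)
    · have := congrFun hmm ⟨1, hk1⟩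
      simp only [hmsg] at this
      norm_num at this
      exact h this
  -- low part analysis
  have hlowmem : ∀ x y x' y' (i : Fin n),
      i ∈ (Finset.univ.filter fun i : Fin n => cw x y i ≠ cw x' y' i ∧ (i : ℕ) < k) →
      (i = N0 ∧ x ≠ x') ∨ (i = N1 ∧ y ≠ y') := by
    intro x y x' y' i hi
    rw [Finset.mem_filter] at hi
    obtain ⟨-, hne, hik⟩ := hi
    set j : Fin k := ⟨(i : ℕ), hik⟩ with hj
    have hcast : Fin.castLE hkn j = i := by apply Fin.ext; rfl
    have h1 : cw x y i = msg x y j := by rw [← hcast, hcw]; exact hPt _ _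
    have h2 : cw x' y' i = msg x' y' j := by rw [← hcast, hcw]; exact hPt _ _
    rw [h1, h2] at hne
    by_cases hj0 : (j : ℕ) = 0
    · left
      refine ⟨Fin.ext hj0, ?_⟩
      intro hxx
      apply hne
      have e1 : msg x y j = e.symm x := by simp only [hmsg]; rw [if_pos hj0]
      have e2 : msg x' y' j = e.symm x' := by simp only [hmsg]; rw [if_pos hj0]
      rw [e1, e2, hxx]
    · by_cases hj1 : (j : ℕ) = 1
      · right
        refine ⟨Fin.ext hj1, ?_⟩
        intro hyy
        apply hne
        have e1 : msg x y j = e.symm y := by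
          simp only [hmsg]; rw [if_neg hj0, if_pos hj1]
        have e2 : msg x' y' j = e.symm y' := by
          simp only [hmsg]; rw [if_neg hj0, if_pos hj1]
        rw [e1, e2, hyy]
      · exfalso
        apply hne
        have e1 : msg x y j = e.symm 0 := by
          simp only [hmsg]; rw [if_neg hj0, if_neg hj1]
        have e2 : msg x' y' j = e.symm 0 := by
          simp only [hmsg]; rw [if_neg hj0, if_neg hj1]
        rw [e1, e2]
  have hlow2 : ∀ x y x' y',
      (Finset.univ.filter fun i : Fin n => cw x y i ≠ cw x' y' i ∧ (i : ℕ) < k).card ≤ 2 := by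
    intro x y x' y'
    have hsub : (Finset.univ.filter fun i : Fin n => cw x y i ≠ cw x' y' i ∧ (i : ℕ) < k)
        ⊆ {N0, N1} := by
      intro i hi
      rcases hlowmem x y x' y' i hi with ⟨rfl, -⟩ | ⟨rfl, -⟩
      · exact Finset.mem_insert_self _ _
      · exact Finset.mem_insert_of_mem (Finset.mem_singleton_self _)
    calc _ ≤ ({N0, N1} : Finset (Fin n)).card := Finset.card_le_card hsub
    _ ≤ 2 := Finset.card_insert_le _ _
  have hlowx : ∀ x y x',
      (Finset.univ.filter fun i : Fin n => cw x y i ≠ cw x' y i ∧ (i : ℕ) < k).card ≤ 1 := by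
    intro x y x'
    have hsub : (Finset.univ.filter fun i : Fin n => cw x y i ≠ cw x' y i ∧ (i : ℕ) < k)
        ⊆ {N0} := by
      intro i hi
      rcases hlowmem x y x' y i hi with ⟨rfl, -⟩ | ⟨-, hyy⟩
      · exact Finset.mem_singleton_self _
      · exact absurd rfl hyy
    calc _ ≤ ({N0} : Finset (Fin n)).card := Finset.card_le_card hsub
    _ = 1 := Finset.card_singleton _
  have hlowy : ∀ x y y',
      (Finset.univ.filter fun i : Fin n => cw x y i ≠ cw x y' i ∧ (i : ℕ) < k).card ≤ 1 := by
    intro x y y'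
    have hsub : (Finset.univ.filter fun i : Fin n => cw x y i ≠ cw x y' i ∧ (i : ℕ) < k)
        ⊆ {N1} := by
      intro i hi
      rcases hlowmem x y x y' i hi with ⟨-, hxx⟩ | ⟨rfl, -⟩
      · exact absurd rfl hxx
      · exact Finset.mem_singleton_self _
    calc _ ≤ ({N1} : Finset (Fin n)).card := Finset.card_le_card hsub
    _ = 1 := Finset.card_singleton _
  -- splitting the Hamming distance
  have hsplit : ∀ x y x' y', hammingDist (cw x y) (cw x' y') =
      (Finset.univ.filter fun i : Fin n => cw x y i ≠ cw x' y' i ∧ (i : ℕ) < k).card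
      + (Finset.univ.filter fun i : Fin n => cw x y i ≠ cw x' y' i ∧ ¬ (i : ℕ) < k).card := by
    intro x y x' y'
    have := Finset.card_filter_add_card_filter_not
      (s := Finset.univ.filter fun i : Fin n => cw x y i ≠ cw x' y' i)
      (p := fun i : Fin n => (i : ℕ) < k)
    rw [Finset.filter_filter, Finset.filter_filter] at this
    rw [hammingDist, ← this]
  -- cardinality of the "check positions"
  have hTcard : (Finset.univ.filter fun i : Fin n => ¬ (i : ℕ) < k).card = n - k := by
    have hlowset : (Finset.univ.filter fun i : Fin n => (i : ℕ) < k)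
        = (Finset.univ : Finset (Fin k)).map
          ⟨Fin.castLE hkn, Fin.castLE_injective hkn⟩ := by
      ext i
      simp only [Finset.mem_filter, Finset.mem_univ, true_and, Finset.mem_map,
        Function.Embedding.coeFn_mk]
      constructor
      · intro h
        exact ⟨⟨(i : ℕ), h⟩, Fin.ext rfl⟩
      · rintro ⟨j, rfl⟩
        exact j.isLt
    have := Finset.card_filter_add_card_filter_not
      (s := (Finset.univ : Finset (Fin n))) (p := fun i : Fin n => (i : ℕ) < k)
    rw [hlowset, Finset.card_map, Finset.card_univ, Fintype.card_fin, Finset.card_univ,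
      Fintype.card_fin] at this
    omega
  have hhighT : ∀ x y x' y',
      (Finset.univ.filter fun i : Fin n => cw x y i ≠ cw x' y' i ∧ ¬ (i : ℕ) < k)
      ⊆ (Finset.univ.filter fun i : Fin n => ¬ (i : ℕ) < k) := by
    intro x y x' y' i hi
    rw [Finset.mem_filter] at hi ⊢
    exact ⟨hi.1, hi.2.2⟩
  -- first step : n ≥ k + 3
  have hn3 : k + 3 ≤ n := by
    by_contra hn2
    push_neg at hn2
    have hd := hdist (msg 0 1) (msg 1 1) (hmsgne 0 1 1 1 (Or.inl (by decide)))
    rw [show enc (msg 0 1) = cw 0 1 from rfl, show enc (msg 1 1) = cw 1 1 from rfl,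
      hsplit 0 1 1 1] at hd
    have h1 := hlowx 0 1 1
    have h2 : (Finset.univ.filter fun i : Fin n => cw 0 1 i ≠ cw 1 1 i ∧ ¬ (i : ℕ) < k).card
        ≤ n - k := hTcard ▸ Finset.card_le_card (hhighT 0 1 1 1)
    omega
  have hn : n = k + 3 := by omega
  -- check positions
  set P : Fin 3 → Fin n := fun t => ⟨k + (t : ℕ), by omega⟩ with hPdef
  have hPinj : Function.Injective P := by
    intro a b hab
    have := congrArg Fin.val hab
    simp only [hPdef] at this
    exact Fin.ext (by omega)
  set S : Finset (Fin n) := (Finset.univ : Finset (Fin 3)).map ⟨P, hPinj⟩ with hS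
  have hScard : S.card = 3 := by
    rw [hS, Finset.card_map, Finset.card_univ, Fintype.card_fin]
  have hmemS : ∀ i : Fin n, ¬ (i : ℕ) < k → i ∈ S := by
    intro i hik
    rw [hS, Finset.mem_map]
    refine ⟨⟨(i : ℕ) - k, by omega⟩, Finset.mem_univ _, ?_⟩
    simp only [Function.Embedding.coeFn_mk, hPdef]
    apply Fin.ext
    simp only []
    omega
  have hSnotlow : ∀ i ∈ S, ¬ (i : ℕ) < k := by
    intro i hi
    rw [hS, Finset.mem_map] at hi
    obtain ⟨t, -, rfl⟩ := hi
    simp only [Function.Embedding.coeFn_mk, hPdef]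
    omega
  have hhighS : ∀ x y x' y',
      (Finset.univ.filter fun i : Fin n => cw x y i ≠ cw x' y' i ∧ ¬ (i : ℕ) < k) ⊆ S := by
    intro x y x' y' i hi
    rw [Finset.mem_filter] at hi
    exact hmemS i hi.2.2
  -- single-change : all check positions disagree
  have hallx : ∀ x y x', x ≠ x' → ∀ t : Fin 3, cw x y (P t) ≠ cw x' y (P t) := by
    intro x y x' hxx t
    have hd := hdist (msg x y) (msg x' y) (hmsgne x y x' y (Or.inl hxx))
    rw [show enc (msg x y) = cw x y from rfl, show enc (msg x' y) = cw x' y from rfl,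
      hsplit x y x' y] at hd
    have h1 := hlowx x y x'
    have hcard3 : 3 ≤ (Finset.univ.filter
        fun i : Fin n => cw x y i ≠ cw x' y i ∧ ¬ (i : ℕ) < k).card := by omega
    have heq : (Finset.univ.filter
        fun i : Fin n => cw x y i ≠ cw x' y i ∧ ¬ (i : ℕ) < k) = S :=
      Finset.eq_of_subset_of_card_le (hhighS x y x' y) (by omega)
    have hPmem : P t ∈ S := by
      rw [hS, Finset.mem_map]
      exact ⟨t, Finset.mem_univ _, rfl⟩
    rw [← heq, Finset.mem_filter] at hPmem
    exact hPmem.2.1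
  have hally : ∀ x y y', y ≠ y' → ∀ t : Fin 3, cw x y (P t) ≠ cw x y' (P t) := by
    intro x y y' hyy t
    have hd := hdist (msg x y) (msg x y') (hmsgne x y x y' (Or.inr hyy))
    rw [show enc (msg x y) = cw x y from rfl, show enc (msg x y') = cw x y' from rfl,
      hsplit x y x y'] at hd
    have h1 := hlowy x y y'
    have hcard3 : 3 ≤ (Finset.univ.filter
        fun i : Fin n => cw x y i ≠ cw x y' i ∧ ¬ (i : ℕ) < k).card := by omega
    have heq : (Finset.univ.filter
        fun i : Fin n => cw x y i ≠ cw x y' i ∧ ¬ (i : ℕ) < k) = S :=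
      Finset.eq_of_subset_of_card_le (hhighS x y x y') (by omega)
    have hPmem : P t ∈ S := by
      rw [hS, Finset.mem_map]
      exact ⟨t, Finset.mem_univ _, rfl⟩
    rw [← heq, Finset.mem_filter] at hPmem
    exact hPmem.2.1
  -- double-change : at most one check position agrees
  have hdouble : ∀ x' y', x' ≠ 0 → y' ≠ 0 →
      (Finset.univ.filter (fun t : Fin 3 => cw x' y' (P t) = cw 0 0 (P t))).card ≤ 1 := by
    intro x' y' hx' hy'
    have hd := hdist (msg x' y') (msg 0 0) (hmsgne x' y' 0 0 (Or.inl hx'))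
    rw [show enc (msg x' y') = cw x' y' from rfl, show enc (msg 0 0) = cw 0 0 from rfl,
      hsplit x' y' 0 0] at hd
    have h1 := hlow2 x' y' 0 0
    have hcard2 : 2 ≤ (Finset.univ.filter
        fun i : Fin n => cw x' y' i ≠ cw 0 0 i ∧ ¬ (i : ℕ) < k).card := by omega
    -- the disagreement set within S
    have heqdis : S.filter (fun i => cw x' y' i ≠ cw 0 0 i)
        = (Finset.univ.filter fun i : Fin n => cw x' y' i ≠ cw 0 0 i ∧ ¬ (i : ℕ) < k) := by
      ext i
      simp only [Finset.mem_filter, Finset.mem_univ, true_and]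
      constructor
      · intro ⟨hiS, hdis⟩
        exact ⟨hdis, hSnotlow i hiS⟩
      · intro ⟨hdis, hik⟩
        exact ⟨hmemS i hik, hdis⟩
    have hparts := Finset.card_filter_add_card_filter_not
      (s := S) (p := fun i : Fin n => cw x' y' i ≠ cw 0 0 i)
    rw [heqdis, hScard] at hparts
    have hagree : (S.filter (fun i => ¬ cw x' y' i ≠ cw 0 0 i)).card ≤ 1 := by omega
    -- transfer to Fin 3 via the map P
    have htrans : (Finset.univ.filter (fun t : Fin 3 => cw x' y' (P t) = cw 0 0 (P t))).card
        = (S.filter (fun i => ¬ cw x' y' i ≠ cw 0 0 i)).card := by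
      rw [hS, Finset.filter_map, Finset.card_map]
      congr 1
      apply Finset.filter_congr
      intro t _
      simp only [Function.Embedding.coeFn_mk, Function.comp, not_not]
    rw [htrans]
    exact hagree
  -- assemble and apply the pigeonhole lemma
  apply pigeon (fun t x y => e (cw x y (P t)))
  · intro t
    exact single_latin (fun x y => e (cw x y (P t)))
      (fun x x' y hxx h => hallx x y x' hxx t (e.injective h))
      (fun x y y' hyy h => hally x y y' hyy t (e.injective h))
  · intro p hp1 hp2
    have : (Finset.univ.filter (fun t : Fin 3 => e (cw p.1 p.2 (P t)) = e (cw 0 0 (P t))))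
        = (Finset.univ.filter (fun t : Fin 3 => cw p.1 p.2 (P t) = cw 0 0 (P t))) := by
      apply Finset.filter_congr
      intro t _
      simp only [EmbeddingLike.apply_eq_iff_eq]
    rw [this]
    exact hdouble p.1 p.2 hp1 hp2
end

section
/- Let C be a systematic code over any alphabet of size q ≥ 2, with dimension k ≥ 2 and minimum distance d ∈ {3, 4}. Then n ≥ ∑_{j=0}^{k-1} ⌈d/q^j⌉. -/
open Finset

lemma plotkin_core {n : ℕ} {A : Type*} [Fintype A] [DecidableEq A]
    (T : Finset (Fin n → A)) (J : Finset (Fin n)) (d : ℕ)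
    (hdist : ∀ x ∈ T, ∀ y ∈ T, x ≠ y → d ≤ hammingDist x y)
    (hagree : ∀ x ∈ T, ∀ y ∈ T, ∀ i : Fin n, i ∉ J → x i = y i) :
    Fintype.card A * (T.card * (T.card - 1) * d) ≤
      J.card * ((Fintype.card A - 1) * T.card ^ 2) := by
  set q := Fintype.card A with hq
  set M := T.card with hM
  set D := ∑ x ∈ T, ∑ y ∈ T, hammingDist x y with hD
  -- lower bound
  have hlow : M * (M - 1) * d ≤ D := by
    have : ∀ x ∈ T, (M - 1) * d ≤ ∑ y ∈ T, hammingDist x y := by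
      intro x hx
      calc (M - 1) * d = ∑ y ∈ T.erase x, d := by
            rw [Finset.sum_const, smul_eq_mul, Finset.card_erase_of_mem hx]
        _ ≤ ∑ y ∈ T.erase x, hammingDist x y := by
            refine Finset.sum_le_sum fun y hy => ?_
            exact hdist x hx y (Finset.mem_of_mem_erase hy)
              (fun h => (Finset.ne_of_mem_erase hy) h.symm)
        _ ≤ ∑ y ∈ T, hammingDist x y :=
            Finset.sum_le_sum_of_subset (Finset.erase_subset _ _)
    calc M * (M - 1) * d = ∑ _x ∈ T, (M - 1) * d := by
          rw [Finset.sum_const, smul_eq_mul, mul_assoc]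
      _ ≤ D := Finset.sum_le_sum this
  -- rewrite D coordinatewise
  set N : Fin n → ℕ := fun i => ∑ x ∈ T, ∑ y ∈ T, (if x i ≠ y i then 1 else 0) with hN
  have hDrw : D = ∑ i ∈ J, N i := by
    have h1 : ∀ x y : Fin n → A, hammingDist x y
        = ∑ i : Fin n, if x i ≠ y i then 1 else 0 := by
      intro x y; rw [hammingDist]; simp [Finset.card_filter]
    have h2 : D = ∑ i : Fin n, N i := by
      rw [hD]
      simp_rw [h1, hN]
      calc ∑ x ∈ T, ∑ y ∈ T, ∑ i : Fin n, (if x i ≠ y i then 1 else 0)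
          = ∑ x ∈ T, ∑ i : Fin n, ∑ y ∈ T, (if x i ≠ y i then 1 else 0) :=
            Finset.sum_congr rfl fun x _ => Finset.sum_comm
        _ = ∑ i : Fin n, ∑ x ∈ T, ∑ y ∈ T, (if x i ≠ y i then 1 else 0) :=
            Finset.sum_comm
    rw [h2]
    symm
    apply Finset.sum_subset (Finset.subset_univ J)
    intro i _ hiJ
    rw [hN]
    refine Finset.sum_eq_zero fun x hx => Finset.sum_eq_zero fun y hy => ?_
    simp [hagree x hx y hy i hiJ]
  -- per-coordinate bound
  have hNi : ∀ i ∈ J, q * N i ≤ (q - 1) * M ^ 2 := by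
    intro i _
    set f : A → ℕ := fun a => (T.filter fun x => x i = a).card with hf
    have hfsum : ∑ a : A, f a = M :=
      (Finset.card_eq_sum_card_fiberwise fun x _ => Finset.mem_univ (x i)).symm
    set E : ℕ := ∑ x ∈ T, ∑ y ∈ T, (if x i = y i then 1 else 0) with hE
    have hE1 : E = ∑ x ∈ T, f (x i) := by
      rw [hE]
      refine Finset.sum_congr rfl fun x _ => ?_
      simp only [hf, Finset.card_filter]
      refine Finset.sum_congr rfl fun y _ => ?_
      simp [eq_comm]
    have hE2 : E = ∑ a : A, f a ^ 2 := by
      rw [hE1]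
      rw [← Finset.sum_fiberwise_of_maps_to (g := fun x => x i) (fun x _ => Finset.mem_univ (x i))]
      refine Finset.sum_congr rfl fun a _ => ?_
      rw [Finset.sum_congr rfl (fun x hx => by
        rw [(Finset.mem_filter.mp hx).2] : ∀ x ∈ T.filter fun x => x i = a, f (x i) = f a),
        Finset.sum_const, smul_eq_mul, sq]
    have hCS : M ^ 2 ≤ q * E := by
      rw [hE2, ← hfsum, hq, ← Finset.card_univ]
      exact sq_sum_le_card_mul_sum_sq
    have hNE : N i + E = M ^ 2 := by
      have step : ∀ x ∈ T,
          (∑ y ∈ T, (if x i ≠ y i then 1 else 0))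
            + ∑ y ∈ T, ((if x i = y i then 1 else 0 : ℕ)) = M := by
        intro x _
        have h1 : (∑ y ∈ T, ((if x i ≠ y i then 1 else 0) + if x i = y i then 1 else 0 : ℕ))
            = ∑ _y ∈ T, 1 :=
          Finset.sum_congr rfl fun y _ => by by_cases h : x i = y i <;> simp [h]
        rw [← Finset.sum_add_distrib, h1]
        simp [hM]
      have : N i + E = ∑ x ∈ T, ((∑ y ∈ T, (if x i ≠ y i then 1 else 0))
          + ∑ y ∈ T, ((if x i = y i then 1 else 0 : ℕ))) := by
        simp only [hN, hE, Finset.sum_add_distrib]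
      rw [this, Finset.sum_congr rfl step]
      simp [sq, hM]
    have key : q * N i + q * E = q * M ^ 2 := by rw [← Nat.mul_add, hNE]
    have hqm : (q - 1) * M ^ 2 = q * M ^ 2 - M ^ 2 := by rw [Nat.sub_mul, one_mul]
    rw [hqm]
    exact Nat.le_sub_of_add_le (le_of_le_of_eq (Nat.add_le_add_left hCS _) key)
  -- combine
  have hup : q * D ≤ J.card * ((q - 1) * M ^ 2) := by
    rw [hDrw, Finset.mul_sum]
    calc ∑ i ∈ J, q * N i ≤ ∑ i ∈ J, (q - 1) * M ^ 2 := Finset.sum_le_sum hNi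
      _ = J.card * ((q - 1) * M ^ 2) := by rw [Finset.sum_const, smul_eq_mul]
  exact le_trans (Nat.mul_le_mul_left q hlow) hup


lemma arith_aux {q m d : ℕ} (hq : 2 ≤ q)
    (hplot : q * (q ^ 2 * (q ^ 2 - 1) * d) ≤ m * ((q - 1) * (q ^ 2) ^ 2)) :
    (q + 1) * d ≤ q * m := by
  obtain ⟨r, rfl⟩ : ∃ r, q = r + 2 := ⟨q - 2, by omega⟩
  have e1 : (r + 2) ^ 2 - 1 = (r + 1) * (r + 3) := by
    have : (r + 2) ^ 2 = (r + 1) * (r + 3) + 1 := by ring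
    omega
  have e2 : r + 2 - 1 = r + 1 := by omega
  rw [e1, e2] at hplot
  have hfac : 0 < (r + 1) * (r + 2) ^ 3 := by positivity
  refine Nat.le_of_mul_le_mul_left ?_ hfac
  calc (r + 1) * (r + 2) ^ 3 * ((r + 2 + 1) * d)
      = (r + 2) * ((r + 2) ^ 2 * ((r + 1) * (r + 3)) * d) := by ring
    _ ≤ m * ((r + 1) * ((r + 2) ^ 2) ^ 2) := hplot
    _ = (r + 1) * (r + 2) ^ 3 * ((r + 2) * m) := by ring

theorem stmt8 {A : Type*} [Fintype A] [DecidableEq A] {n k d : ℕ}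
    (hq : 2 ≤ Fintype.card A)
    (C : Finset (Fin n → A)) (hk : 2 ≤ k) (hkn : k ≤ n)
    (hcard : C.card = Fintype.card A ^ k)
    (hsys : systematicOn hkn C)
    (hmin : minDistIs C d)
    (hd : d = 3 ∨ d = 4) :
    (n : ℤ) ≥ griesmerSum (Fintype.card A) d k := by
  set q := Fintype.card A with hqdef
  have hA : Nonempty A := Fintype.card_pos_iff.mp (by omega)
  obtain ⟨a0⟩ := hA
  have hk2n : k - 2 < n := by omega
  -- the two "free" systematic coordinates
  set ik2 : Fin k := ⟨k - 2, by omega⟩ with hik2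
  set ik1 : Fin k := ⟨k - 1, by omega⟩ with hik1
  set v : A → A → Fin k → A := fun a b i =>
    if (i : ℕ) = k - 2 then a else if (i : ℕ) = k - 1 then b else a0 with hv
  have hv2 : ∀ a b, v a b ik2 = a := by intro a b; simp [hv, hik2]
  have hv1 : ∀ a b, v a b ik1 = b := by
    intro a b
    have h12 : k - 1 ≠ k - 2 := by omega
    simp [hv, hik1, h12]
  -- choose codewords realizing each systematic vector
  have hsurj : ∀ w : Fin k → A, ∃ c, c ∈ C ∧ (fun i => c (Fin.castLE hkn i)) = w := by
    intro w
    obtain ⟨c, hc, hcw⟩ := hsys.surjOn (Set.mem_univ w)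
    exact ⟨c, hc, hcw⟩
  choose f hfC hfw using hsurj
  set T : Finset (Fin n → A) := Finset.image (fun p : A × A => f (v p.1 p.2)) Finset.univ
    with hT
  have hTC : ∀ x ∈ T, x ∈ C := by
    intro x hx
    rw [hT, Finset.mem_image] at hx
    obtain ⟨p, -, rfl⟩ := hx
    exact hfC _
  have hinj : Function.Injective (fun p : A × A => f (v p.1 p.2)) := by
    intro p p' h
    have hvv : v p.1 p.2 = v p'.1 p'.2 := by
      rw [← hfw (v p.1 p.2), ← hfw (v p'.1 p'.2)]
      simp only at h
      rw [h]
    have h2 := congrFun hvv ik2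
    have h1 := congrFun hvv ik1
    rw [hv2, hv2] at h2
    rw [hv1, hv1] at h1
    exact Prod.ext h2 h1
  have hTcard : T.card = q ^ 2 := by
    rw [hT, Finset.card_image_of_injective _ hinj, Finset.card_univ, Fintype.card_prod, sq]
  set J : Finset (Fin n) := Finset.Ici (⟨k - 2, hk2n⟩ : Fin n) with hJ
  have hJcard : J.card = n - (k - 2) := by rw [hJ, Fin.card_Ici]
  have hagree : ∀ x ∈ T, ∀ y ∈ T, ∀ i : Fin n, i ∉ J → x i = y i := by
    have key : ∀ x ∈ T, ∀ i : Fin n, i ∉ J → x i = a0 := by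
      intro x hx i hi
      rw [hJ, Finset.mem_Ici] at hi
      have hival : (i : ℕ) < k - 2 := by
        by_contra hcon
        exact hi (by rw [Fin.le_def]; simpa using (by omega : k - 2 ≤ (i : ℕ)))
      rw [hT, Finset.mem_image] at hx
      obtain ⟨p, -, rfl⟩ := hx
      have hlt : (i : ℕ) < k := by omega
      have : f (v p.1 p.2) (Fin.castLE hkn ⟨(i : ℕ), hlt⟩) = v p.1 p.2 ⟨(i : ℕ), hlt⟩ :=
        congrFun (hfw (v p.1 p.2)) ⟨(i : ℕ), hlt⟩
      have hieq : Fin.castLE hkn ⟨(i : ℕ), hlt⟩ = i := by ext; simp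
      rw [hieq] at this
      rw [this, hv]
      have e1 : (i : ℕ) ≠ k - 2 := by omega
      have e2 : (i : ℕ) ≠ k - 1 := by omega
      simp [e1, e2]
    intro x hx y hy i hi
    rw [key x hx i hi, key y hy i hi]
  have hdist : ∀ x ∈ T, ∀ y ∈ T, x ≠ y → d ≤ hammingDist x y :=
    fun x hx y hy => hmin.1 x (hTC x hx) y (hTC y hy)
  -- Plotkin
  have hplot := plotkin_core T J d hdist hagree
  rw [hTcard, hJcard] at hplot
  -- arithmetic: derive (q+1)*d ≤ q*(n-(k-2))
  set m : ℕ := n - (k - 2) with hm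
  rw [← hqdef] at hplot
  have harith : (q + 1) * d ≤ q * m := arith_aux hq hplot
  -- compute the Griesmer sum
  have hq0 : (0 : ℚ) < (q : ℚ) := by positivity
  have hd1 : (0 : ℚ) < (d : ℚ) := by
    have : 0 < d := by omega
    exact_mod_cast this
  have hgs : griesmerSum q d k = (d : ℤ) + ⌈(d : ℚ) / (q : ℚ)⌉ + (k - 2 : ℕ) := by
    rw [griesmerSum, Finset.range_eq_Ico,
      ← Finset.sum_Ico_consecutive _ (by omega : 0 ≤ 2) (by omega : 2 ≤ k)]
    have h01 : ∑ j ∈ Finset.Ico 0 2, ⌈(d : ℚ) / (q : ℚ) ^ j⌉ = (d : ℤ) + ⌈(d : ℚ) / (q : ℚ)⌉ := by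
      rw [show Finset.Ico 0 2 = {0, 1} by rfl]
      rw [Finset.sum_insert (by simp), Finset.sum_singleton]
      simp
    have h2k : ∑ j ∈ Finset.Ico 2 k, ⌈(d : ℚ) / (q : ℚ) ^ j⌉ = (k - 2 : ℕ) := by
      have hone : ∀ j ∈ Finset.Ico 2 k, ⌈(d : ℚ) / (q : ℚ) ^ j⌉ = (1 : ℤ) := by
        intro j hj
        have hj2 : 2 ≤ j := (Finset.mem_Ico.mp hj).1
        have hdq : (d : ℚ) ≤ (q : ℚ) ^ j := by
          have h4 : (4 : ℕ) ≤ q ^ j :=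
            le_trans (by norm_num) (le_trans (Nat.pow_le_pow_right (by norm_num) hj2)
              (Nat.pow_le_pow_left hq j))
          have hd4 : d ≤ q ^ j := by omega
          exact_mod_cast hd4
        have hx : (0 : ℚ) < (d : ℚ) / (q : ℚ) ^ j := by positivity
        have h1 : (d : ℚ) / (q : ℚ) ^ j ≤ 1 := by
          rw [div_le_one (by positivity)]
          exact hdq
        exact le_antisymm (Int.ceil_le.mpr (by exact_mod_cast h1)) (Int.ceil_pos.mpr hx)
      rw [Finset.sum_congr rfl hone, Finset.sum_const, Nat.card_Ico]
      simp
    rw [h01, h2k]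
  have hceil : ⌈(d : ℚ) / (q : ℚ)⌉ ≤ (m : ℤ) - d := by
    refine Int.ceil_le.mpr ?_
    rw [div_le_iff₀ hq0]
    have hc : ((q : ℚ) + 1) * d ≤ q * m := by exact_mod_cast harith
    push_cast
    nlinarith
  have hnm : (m : ℤ) + ((k - 2 : ℕ) : ℤ) = n := by omega
  rw [hgs]
  linarith [hceil, hnm]
end

section
/- Every binary systematic code of dimension k = 2 and minimum distance d = 5 has length n ≥ 8 (= 5 + ⌈5/2⌉). -/
open Finset

private lemma g_le : ∀ w x y z : Fin 2,
    ((if w ≠ x then 1 else 0) + (if w ≠ y then 1 else 0) + (if w ≠ z then 1 else 0) +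
      (if x ≠ y then 1 else 0) + (if x ≠ z then 1 else 0) + (if y ≠ z then 1 else 0) : ℕ) ≤ 4 := by decide

private lemma hd_eq {n : ℕ} (x y : Fin n → Fin 2) :
    hammingDist x y = ∑ i, if x i ≠ y i then 1 else 0 := by
  rw [hammingDist, Finset.card_filter]

theorem stmt9 {n : ℕ}
    (C : Finset (Fin n → Fin 2)) (hkn : 2 ≤ n)
    (hcard : C.card = 2 ^ 2)
    (hsys : systematicOn hkn C)
    (hmin : minDistIs C 5) :
    n ≥ 8 := by
  classical
  have hsurj := hsys.surjOn
  obtain ⟨a, ha, hfa⟩ := hsurj (Set.mem_univ ![0, 0])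
  obtain ⟨b, hb, hfb⟩ := hsurj (Set.mem_univ ![0, 1])
  obtain ⟨c, hc, hfc⟩ := hsurj (Set.mem_univ ![1, 0])
  obtain ⟨d, hd, hfd⟩ := hsurj (Set.mem_univ ![1, 1])
  have hab : a ≠ b := by rintro rfl; rw [hfa] at hfb; exact absurd (congrFun hfb 1) (by decide)
  have hac : a ≠ c := by rintro rfl; rw [hfa] at hfc; exact absurd (congrFun hfc 0) (by decide)
  have had : a ≠ d := by rintro rfl; rw [hfa] at hfd; exact absurd (congrFun hfd 0) (by decide)
  have hbc : b ≠ c := by rintro rfl; rw [hfb] at hfc; exact absurd (congrFun hfc 0) (by decide)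
  have hbd : b ≠ d := by rintro rfl; rw [hfb] at hfd; exact absurd (congrFun hfd 0) (by decide)
  have hcd : c ≠ d := by rintro rfl; rw [hfc] at hfd; exact absurd (congrFun hfd 1) (by decide)
  have h1 := hmin.1 a ha b hb hab
  have h2 := hmin.1 a ha c hc hac
  have h3 := hmin.1 a ha d hd had
  have h4 := hmin.1 b hb c hc hbc
  have h5 := hmin.1 b hb d hd hbd
  have h6 := hmin.1 c hc d hd hcd
  have key : hammingDist a b + hammingDist a c + hammingDist a d +
      hammingDist b c + hammingDist b d + hammingDist c d ≤ 4 * n := by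
    simp only [hd_eq, ← Finset.sum_add_distrib]
    calc (∑ i, ((if a i ≠ b i then 1 else 0) + (if a i ≠ c i then 1 else 0) +
          (if a i ≠ d i then 1 else 0) + (if b i ≠ c i then 1 else 0) +
          (if b i ≠ d i then 1 else 0) + (if c i ≠ d i then 1 else 0)))
        ≤ ∑ _i : Fin n, 4 := Finset.sum_le_sum fun i _ => g_le (a i) (b i) (c i) (d i)
      _ = 4 * n := by simp [mul_comm]
  omega
end

section
/- Every binary systematic code of dimension k = 2 and minimum distance d = 6 has length n ≥ 9 (= 6 + ⌈6/2⌉). -/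
open Finset

lemma plotkin_aux {n : ℕ} (x y z : Fin n → Fin 2) :
    hammingDist x y + hammingDist y z + hammingDist x z ≤ 2 * n := by
  simp only [hammingDist, Finset.card_filter, ← Finset.sum_add_distrib]
  calc (∑ i : Fin n, ((if x i ≠ y i then 1 else 0) + (if y i ≠ z i then 1 else 0)
        + (if x i ≠ z i then 1 else 0)))
      ≤ ∑ _i : Fin n, 2 := by
        apply Finset.sum_le_sum
        intro i _
        have h : ∀ a b c : Fin 2, (if a ≠ b then 1 else 0) + (if b ≠ c then 1 else 0)
            + (if a ≠ c then 1 else 0) ≤ 2 := by decide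
        exact h _ _ _
    _ = 2 * n := by simp [Finset.sum_const, mul_comm]

theorem stmt10 {n : ℕ}
    (C : Finset (Fin n → Fin 2)) (hkn : 2 ≤ n)
    (hcard : C.card = 2 ^ 2)
    (hsys : systematicOn hkn C)
    (hmin : minDistIs C 6) :
    n ≥ 9 := by
  obtain ⟨x, y, z, hx, hy, hz, hxy, hxz, hyz⟩ := Finset.two_lt_card_iff.mp (by omega : 2 < C.card)
  have h1 := hmin.1 x hx y hy hxy
  have h2 := hmin.1 y hy z hz hyz
  have h3 := hmin.1 x hx z hz hxz
  have := plotkin_aux x y z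
  omega
end

section
/- There is no binary systematic code of length n = d + k + 1, dimension k ≥ 3, and minimum distance d = 5. Equivalently, every binary systematic code with k ≥ 3 and d = 5 satisfies n ≥ d + k + 2 = ∑_{j=0}^{k-1} ⌈5/2^j⌉. -/
open Finset

/-
Take the 2³ codewords whose information part vanishes outside the first three positions. They
agree on the other k - 3 information positions, so deleting those leaves 8 binary words of length
n - k + 3 ≤ 9 at pairwise distance ≥ 5. Appending a parity bit makes all distances even, hence
≥ 6, and 8 words of length ≤ 10 at distance 6 violate Plotkin's bound 2 · (8 · 7 · 6) ≤ 10 · 8².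
-/

section Plotkin

variable {S ι α : Type*} [Fintype S] [Fintype ι] [DecidableEq α]

lemma sum_sum_ite_eq_sum_card_fiber_sq [Fintype α] (f : S → α) :
    ∑ s, ∑ t, (if f s = f t then 1 else 0) = ∑ a, #{s | f s = a} ^ 2 := by
  calc ∑ s, ∑ t, (if f s = f t then 1 else 0)
      = ∑ s, #{t | f t = f s} := by simp only [sum_boole, eq_comm, Nat.cast_id]
    _ = ∑ a, ∑ s with f s = a, #{t | f t = a} :=
      (sum_fiberwise' univ f fun a => #{t | f t = a}).symm
    _ = ∑ a, #{s | f s = a} ^ 2 := by simp only [sum_const, smul_eq_mul, sq]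

lemma card_sq_le_card_mul_sum_sum_ite_eq [Fintype α] (f : S → α) :
    Fintype.card S ^ 2 ≤ Fintype.card α * ∑ s, ∑ t, (if f s = f t then 1 else 0) := by
  rw [sum_sum_ite_eq_sum_card_fiber_sq, ← card_univ,
    card_eq_sum_card_fiberwise (f := f) (t := univ) fun _ _ => mem_univ _]
  exact sq_sum_le_card_mul_sum_sq

lemma sum_sum_hammingDist_add_sum_sum_sum_ite_eq (v : S → ι → α) :
    ∑ s, ∑ t, hammingDist (v s) (v t) + ∑ i, ∑ s, ∑ t, (if v s i = v t i then 1 else 0) =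
      Fintype.card ι * Fintype.card S ^ 2 := by
  have hpoint : ∀ s t i, ((if v s i ≠ v t i then 1 else 0) + if v s i = v t i then 1 else 0) = 1 :=
    fun s t i => by by_cases h : v s i = v t i <;> simp [h]
  simp only [hammingDist, card_filter, sum_comm (γ := ι), ← sum_add_distrib, hpoint]
  simp only [sum_const, card_univ, smul_eq_mul, mul_one, sq]
  ring

theorem plotkin_bound [Fintype α] {d : ℕ} (v : S → ι → α)
    (hv : Pairwise fun s t => d ≤ hammingDist (v s) (v t)) :
    Fintype.card α * (Fintype.card S * (Fintype.card S - 1) * d) ≤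
      (Fintype.card α - 1) * (Fintype.card ι * Fintype.card S ^ 2) := by
  classical
  have htotal := sum_sum_hammingDist_add_sum_sum_sum_ite_eq v
  set q := Fintype.card α
  set m := Fintype.card S
  have hlower : m * (m - 1) * d ≤ ∑ s, ∑ t, hammingDist (v s) (v t) := by
    calc m * (m - 1) * d = ∑ s : S, ∑ t ∈ univ.erase s, d := by
          simp [card_erase_of_mem, m, mul_assoc]
      _ ≤ ∑ s, ∑ t ∈ univ.erase s, hammingDist (v s) (v t) :=
          sum_le_sum fun s _ => sum_le_sum fun t ht => hv (ne_of_mem_erase ht).symm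
      _ ≤ ∑ s, ∑ t, hammingDist (v s) (v t) :=
          sum_le_sum fun s _ => sum_le_sum_of_subset (erase_subset _ _)
  have hagree : Fintype.card ι * m ^ 2 ≤ q * ∑ i, ∑ s, ∑ t, (if v s i = v t i then 1 else 0) := by
    rw [mul_sum]
    simpa using sum_le_sum fun i (_ : i ∈ univ) => card_sq_le_card_mul_sum_sum_ite_eq (v · i)
  have hscaled := Nat.mul_le_mul_left q hlower
  have hsplit := congrArg (q * ·) htotal
  simp only [mul_add] at hsplit
  rw [Nat.sub_one_mul]
  omega

end Plotkin

section ParityExtension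

variable {ι : Type*} [Fintype ι]

def parityExtend (x : ι → ZMod 2) : Option ι → ZMod 2 := fun o => o.elim (∑ i, x i) x

lemma hammingDist_parityExtend (x y : ι → ZMod 2) :
    hammingDist (parityExtend x) (parityExtend y) =
      hammingDist x y + if ∑ i, x i ≠ ∑ i, y i then 1 else 0 := by
  rw [hammingDist, hammingDist, card_filter, card_filter, Fintype.sum_option, add_comm]
  rfl

lemma natCast_hammingDist_eq_sum_add_sum (x y : ι → ZMod 2) :
    (hammingDist x y : ZMod 2) = ∑ i, x i + ∑ i, y i := by
  have hpoint : ∀ a b : ZMod 2, (if a ≠ b then (1 : ZMod 2) else 0) = a + b := by decide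
  simp only [hammingDist, card_filter, Nat.cast_sum, Nat.cast_ite, Nat.cast_one, Nat.cast_zero,
    hpoint, sum_add_distrib]

lemma even_hammingDist_parityExtend (x y : ι → ZMod 2) :
    Even (hammingDist (parityExtend x) (parityExtend y)) := by
  rw [← ZMod.natCast_eq_zero_iff_even, hammingDist_parityExtend, Nat.cast_add, natCast_hammingDist_eq_sum_add_sum]
  generalize ∑ i, x i = a
  generalize ∑ i, y i = b
  revert a b
  decide

lemma succ_le_hammingDist_parityExtend {d : ℕ} (hd : Odd d) {x y : ι → ZMod 2}
    (h : d ≤ hammingDist x y) : d + 1 ≤ hammingDist (parityExtend x) (parityExtend y) := by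
  have hle : hammingDist x y ≤ hammingDist (parityExtend x) (parityExtend y) := by
    rw [hammingDist_parityExtend]; exact Nat.le_add_right _ _
  have hne : d ≠ hammingDist (parityExtend x) (parityExtend y) := fun heq =>
    Nat.not_even_iff_odd.2 hd (heq ▸ even_hammingDist_parityExtend x y)
  omega

end ParityExtension

lemma hammingDist_restrict_of_eqOn_compl {ι β : Type*} [Fintype ι] [DecidableEq β]
    {p : ι → Prop} [DecidablePred p] {x y : ι → β} (h : ∀ i, ¬p i → x i = y i) :
    hammingDist (fun i : {i // p i} => x i) (fun i => y i) = hammingDist x y := by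
  simp only [hammingDist, card_filter]
  rw [← sum_subtype {i | p i} (by simp) (fun i => if x i ≠ y i then 1 else 0)]
  refine sum_filter_of_ne fun i _ hi => ?_
  by_contra hp
  simp [h i hp] at hi

lemma card_subtype_fin_lt_or_le_le (a k n : ℕ) :
    Fintype.card {i : Fin n // (i : ℕ) < a ∨ k ≤ i} ≤ a + (n - k) := by
  rw [Fintype.card_subtype, ← card_map Fin.valEmbedding]
  calc #(({i : Fin n | (i : ℕ) < a ∨ k ≤ i} : Finset _).map Fin.valEmbedding)
      ≤ #(range a ∪ Ico k n) := card_le_card fun m hm => by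
        simp only [mem_map, mem_filter, mem_univ, true_and, Fin.valEmbedding_apply] at hm
        obtain ⟨i, hi, rfl⟩ := hm
        simp only [mem_union, mem_range, mem_Ico]
        omega
    _ ≤ a + (n - k) := by
        grw [card_union_le, card_range, Nat.card_Ico]

lemma exists_shortening_of_systematicOn {n k j : ℕ} {A : Type*} [Zero A] {hkn : k ≤ n}
    {C : Finset (Fin n → A)} (hsys : systematicOn hkn C) (hj : j ≤ k) :
    ∃ c : (Fin j → A) → Fin n → A, Function.Injective c ∧ (∀ σ, c σ ∈ C) ∧
      ∀ σ (i : Fin n), j ≤ i → i < k → c σ i = 0 := by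
  let u : (Fin j → A) → Fin k → A := fun σ i => if h : (i : ℕ) < j then σ ⟨i, h⟩ else 0
  choose c hcC hcu using fun σ => hsys.surjOn (Set.mem_univ (u σ))
  refine ⟨c, fun σ τ hστ => ?_, hcC, fun σ i hji hik => ?_⟩
  · funext l
    have := congrFun ((hcu σ).symm.trans (hστ ▸ hcu τ)) ⟨l, by omega⟩
    simpa [u] using this
  · have := congrFun (hcu σ) ⟨i, hik⟩
    simpa only [u, Fin.castLE_mk, Fin.eta, not_lt.2 hji, dite_false] using this

theorem stmt11_general {n k : ℕ}
    (C : Finset (Fin n → Fin 2)) (hk : 3 ≤ k) (hkn : k ≤ n)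
    (hsys : systematicOn hkn C)
    (hmin : minDistIs C 5) :
    n ≥ 5 + k + 2 := by
  by_contra! hn
  obtain ⟨c, hc_inj, hcC, hc_zero⟩ := exists_shortening_of_systematicOn hsys hk
  let P : Fin n → Prop := fun i => (i : ℕ) < 3 ∨ k ≤ i
  let v : (Fin 3 → Fin 2) → Option {i // P i} → ZMod 2 :=
    fun σ => parityExtend fun i => ZMod.finEquiv 2 (c σ i)
  have hv : Pairwise fun σ τ => 6 ≤ hammingDist (v σ) (v τ) := by
    intro σ τ hστ
    refine succ_le_hammingDist_parityExtend (d := 5) (by decide) ?_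
    rw [hammingDist_comp (fun _ => ZMod.finEquiv 2) fun _ => (ZMod.finEquiv 2).injective,
      hammingDist_restrict_of_eqOn_compl fun i hi => ?_]
    · exact hmin.1 _ (hcC σ) _ (hcC τ) (hc_inj.ne hστ)
    · simp only [P, not_or, not_lt, not_le] at hi
      rw [hc_zero σ i hi.1 hi.2, hc_zero τ i hi.1 hi.2]
  have hlen : Fintype.card {i // P i} ≤ 9 := by
    have : Fintype.card {i // P i} ≤ 3 + (n - k) := card_subtype_fin_lt_or_le_le 3 k n
    omega
  have hplotkin := plotkin_bound v hv
  simp only [ZMod.card, Fintype.card_pi, Fintype.card_fin, prod_const, card_univ,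
    Fintype.card_option] at hplotkin
  omega

theorem stmt11 {n k : ℕ}
    (C : Finset (Fin n → Fin 2)) (hk : 3 ≤ k) (hkn : k ≤ n)
    (hcard : C.card = 2 ^ k)
    (hsys : systematicOn hkn C)
    (hmin : minDistIs C 5) :
    n ≥ 5 + k + 2 :=
  stmt11_general C hk hkn hsys hmin
end

section
/- Let d ∈ {5, 6}. There do not exist five binary vectors v0 = 0, v1, v2, v3, v4 in {0,1}^{d+1} such that w(v1) ≥ d-1, w(v2) ≥ d-1, w(v3) ≥ d-2, w(v4) ≥ d-2, d(v1,v2) ≥ d-2, d(v1,v3) ≥ d-1, d(v2,v3) ≥ d-1, d(v1,v4) ≥ d-1, d(v2,v4) ≥ d-2, and d(v3,v4) ≥ d-2. -/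
open Finset

lemma norm_eq_sum' {n : ℕ} (x : Fin n → Fin 2) :
    hammingNorm x = ∑ i, (if x i ≠ 0 then 1 else 0) := by
  simp [hammingNorm, Finset.card_filter]

lemma dist_eq_sum' {n : ℕ} (x y : Fin n → Fin 2) :
    hammingDist x y = ∑ i, (if x i ≠ y i then 1 else 0) := by
  simp [hammingDist, Finset.card_filter]

lemma parity_aux : ∀ a b : Fin 2,
    ((if a ≠ b then 1 else 0) + (if a ≠ 0 then 1 else 0) + (if b ≠ 0 then 1 else 0)) % 2 = 0 := by
  decide

lemma parity' {n : ℕ} (x y : Fin n → Fin 2) :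
    (hammingDist x y + hammingNorm x + hammingNorm y) % 2 = 0 := by
  rw [dist_eq_sum', norm_eq_sum', norm_eq_sum', ← Finset.sum_add_distrib,
    ← Finset.sum_add_distrib, Finset.sum_nat_mod]
  have h : ∀ i : Fin n, (((if x i = y i then 0 else 1) + if x i = 0 then 0 else 1)
      + if y i = 0 then 0 else 1) % 2 = 0 := fun i => by simpa using parity_aux (x i) (y i)
  simp [h]

lemma pattern_bound : ∀ a b c d : Fin 2,
    (if a ≠ 0 then 1 else 0) + (if b ≠ 0 then 1 else 0) + (if c ≠ 0 then 1 else 0)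
      + (if d ≠ 0 then 1 else 0) + (if a ≠ b then 1 else 0) + (if a ≠ c then 1 else 0)
      + (if b ≠ c then 1 else 0) + (if a ≠ d then 1 else 0) + (if b ≠ d then 1 else 0)
      + (if c ≠ d then 1 else 0) ≤ 6 := by
  decide

lemma plotkin_sum {n : ℕ} (v₁ v₂ v₃ v₄ : Fin n → Fin 2) :
    hammingNorm v₁ + hammingNorm v₂ + hammingNorm v₃ + hammingNorm v₄
      + hammingDist v₁ v₂ + hammingDist v₁ v₃ + hammingDist v₂ v₃
      + hammingDist v₁ v₄ + hammingDist v₂ v₄ + hammingDist v₃ v₄ ≤ 6 * n := by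
  simp only [norm_eq_sum', dist_eq_sum', ← Finset.sum_add_distrib]
  calc (∑ i : Fin n, ((if v₁ i ≠ 0 then 1 else 0) + (if v₂ i ≠ 0 then 1 else 0)
        + (if v₃ i ≠ 0 then 1 else 0) + (if v₄ i ≠ 0 then 1 else 0)
        + (if v₁ i ≠ v₂ i then 1 else 0) + (if v₁ i ≠ v₃ i then 1 else 0)
        + (if v₂ i ≠ v₃ i then 1 else 0) + (if v₁ i ≠ v₄ i then 1 else 0)
        + (if v₂ i ≠ v₄ i then 1 else 0) + (if v₃ i ≠ v₄ i then 1 else 0)))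
      ≤ ∑ _i : Fin n, 6 :=
        Finset.sum_le_sum fun i _ => pattern_bound (v₁ i) (v₂ i) (v₃ i) (v₄ i)
    _ = 6 * n := by simp [mul_comm]

theorem stmt17 {d : ℕ} (hd : d = 5 ∨ d = 6) :
    ¬ ∃ v₁ v₂ v₃ v₄ : Fin (d + 1) → Fin 2,
        d - 1 ≤ hammingNorm v₁ ∧ d - 1 ≤ hammingNorm v₂ ∧
        d - 2 ≤ hammingNorm v₃ ∧ d - 2 ≤ hammingNorm v₄ ∧
        d - 2 ≤ hammingDist v₁ v₂ ∧ d - 1 ≤ hammingDist v₁ v₃ ∧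
        d - 1 ≤ hammingDist v₂ v₃ ∧ d - 1 ≤ hammingDist v₁ v₄ ∧
        d - 2 ≤ hammingDist v₂ v₄ ∧ d - 2 ≤ hammingDist v₃ v₄ := by
  rintro ⟨v₁, v₂, v₃, v₄, h1, h2, h3, h4, h12, h13, h23, h14, h24, h34⟩
  have hS := plotkin_sum v₁ v₂ v₃ v₄
  have p12 := parity' v₁ v₂
  have p13 := parity' v₁ v₃
  have p23 := parity' v₂ v₃
  have p14 := parity' v₁ v₄
  have p24 := parity' v₂ v₄
  have p34 := parity' v₃ v₄
  rcases hd with rfl | rfl <;> omega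
end
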